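/- Let H be a complex Hilbert space and let (v_n)_{n=1}^∞ be a total sequence in H. For n ≥ 1 let H_n denote the closure of the linear span of {v_k : k ≥ n}. Then there exists a sequence (u_n)_{n=1}^∞ in H such that: u_n ∈ H_{⌈n/2⌉} for every n; ⟨u_m, u_n⟩ = 0 for all m ≠ n; ‖u_n‖ ∈ {0, 1} for every n; and the closed linear span of {u_n : n ≥ 1} equals H. -/

import Mathlib

/-!
After shifting indices, let `T m` be the closed span of `{v k | k ≥ m}`, so `T 0 = ⊤`. The
innovation `w m := v m - P_{T (m+1)} (v m)` lies in `T m` and is orthogonal to `T (m+1)`, so the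
innovations are pairwise orthogonal; and since `T m ⊆ closure (T (m+1) + 𝕜 v m)`, a vector of
`T m` orthogonal to `w m` lies in `T (m+1)`. By induction, the orthogonal complement `F` of all
innovations lies in every `T m`. The normalised innovations and the Gram–Schmidt family of the
`P_F (v k)` are mutually orthogonal, and together they are total because
`v k = P_F (v k) + P_{Fᗮ} (v k)` with `Fᗮ` the closed span of the innovations. Putting `F`-vectors
at odd and innovations at even positions gives the sequence.
-/

open Function Submodule Set InnerProductSpace
open scoped InnerProductSpace

theorem Function.Surjective.image_comp_sub_one_setOf_one_le {α β : Type*} {f : ℕ → β}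
    (hf : Surjective f) (g : β → α) : (fun n => g (f (n - 1))) '' {n | 1 ≤ n} = range g := by
  rw [← hf.range_comp]
  ext y
  constructor
  · rintro ⟨n, -, rfl⟩
    exact mem_range_self _
  · rintro ⟨k, rfl⟩
    exact ⟨k + 1, by simp, by simp⟩

theorem Pairwise.sumElim {α β γ : Type*} {r : γ → γ → Prop} (hr : ∀ x y, r x y → r y x)
    {a : α → γ} {b : β → γ} (ha : Pairwise (r on a)) (hb : Pairwise (r on b))
    (hab : ∀ i j, r (a i) (b j)) : Pairwise (r on Sum.elim a b) := by
  rintro (i | i) (j | j) hij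
  · exact ha (ne_of_apply_ne Sum.inl hij)
  · exact hab i j
  · exact hr _ _ (hab j i)
  · exact hb (ne_of_apply_ne Sum.inr hij)

namespace InnerProductSpace

variable {𝕜 E ι : Type*} [RCLike 𝕜] [NormedAddCommGroup E] [InnerProductSpace 𝕜 E]
  [LinearOrder ι] [LocallyFiniteOrderBot ι] [WellFoundedLT ι]

theorem inner_gramSchmidtNormed_eq_zero (f : ι → E) {a b : ι} (h : a ≠ b) :
    ⟪gramSchmidtNormed 𝕜 f a, gramSchmidtNormed 𝕜 f b⟫_𝕜 = 0 := by
  simp [gramSchmidtNormed, inner_smul_left, inner_smul_right, gramSchmidt_orthogonal 𝕜 f h]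

theorem norm_gramSchmidtNormed_eq_zero_or_one (f : ι → E) (n : ι) :
    ‖gramSchmidtNormed 𝕜 f n‖ = 0 ∨ ‖gramSchmidtNormed 𝕜 f n‖ = 1 := by
  by_cases h : gramSchmidtNormed 𝕜 f n = 0
  · simp [h]
  · exact Or.inr (gramSchmidtNormed_unit_length' h)

theorem gramSchmidtNormed_mem {f : ι → E} {K : Submodule 𝕜 E} (hf : ∀ i, f i ∈ K) (n : ι) :
    gramSchmidtNormed 𝕜 f n ∈ K := by
  have h : gramSchmidtNormed 𝕜 f n ∈ span 𝕜 (range f) := by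
    rw [← span_gramSchmidt, ← span_gramSchmidtNormed_range]
    exact subset_span (mem_range_self n)
  exact span_le.mpr (range_subset_iff.mpr hf) h

theorem gramSchmidtNormed_of_orthogonal {f : ι → E} (hf : Pairwise (⟪f ·, f ·⟫_𝕜 = 0)) (n : ι) :
    gramSchmidtNormed 𝕜 f n = (‖f n‖⁻¹ : 𝕜) • f n := by
  rw [gramSchmidtNormed, gramSchmidt_of_orthogonal 𝕜 hf]

end InnerProductSpace

namespace Submodule

variable {𝕜 E : Type*} [RCLike 𝕜] [NormedAddCommGroup E] [InnerProductSpace 𝕜 E]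

theorem mem_of_mem_topologicalClosure_sup_span_singleton {K : Submodule 𝕜 E}
    [K.HasOrthogonalProjection] {v x : E} (hx : x ∈ (K ⊔ span 𝕜 {v}).topologicalClosure)
    (hxv : ⟪Kᗮ.starProjection v, x⟫_𝕜 = 0) : x ∈ K := by
  set q := Kᗮ.starProjection
  -- `q` maps `K ⊔ 𝕜 ∙ v` into the closed line `𝕜 ∙ q v`, so `q x` lies on that line and is
  -- orthogonal to it.
  have hmaps : K ⊔ span 𝕜 {v} ≤ (span 𝕜 {q v}).comap (q : E →ₗ[𝕜] E) := by
    refine sup_le (fun y hy => ?_) (span_le.mpr ?_)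
    · simp [q, starProjection_orthogonal_apply_eq_zero hy]
    · simp
  have hqx : q x ∈ span 𝕜 {q v} := topologicalClosure_minimal _ hmaps
    ((span 𝕜 {q v}).closed_of_finiteDimensional.preimage q.continuous) hx
  have hqx' : q x ∈ (span 𝕜 {q v})ᗮ := by
    rwa [mem_orthogonal_singleton_iff_inner_right, ← inner_starProjection_left_eq_right,
      starProjection_eq_self_iff.mpr (starProjection_apply_mem _ v)]
  have hq : q x = 0 := by simpa using (inf_orthogonal_eq_bot (span 𝕜 {q v})).le ⟨hqx, hqx'⟩
  rwa [starProjection_apply_eq_zero_iff, orthogonal_orthogonal] at hq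

theorem mem_topologicalClosure_of_starProjection_mem {K A : Submodule 𝕜 E}
    [K.HasOrthogonalProjection] (hK : Kᗮ ≤ A.topologicalClosure) {x : E}
    (hx : K.starProjection x ∈ A) : x ∈ A.topologicalClosure := by
  rw [← starProjection_add_starProjection_orthogonal (K := K) x]
  exact add_mem (A.le_topologicalClosure hx) (hK (starProjection_apply_mem _ x))

end Submodule

noncomputable section

variable (𝕜 : Type*) {E : Type*} [RCLike 𝕜] [NormedAddCommGroup E] [InnerProductSpace 𝕜 E]
  (v : ℕ → E)

def tailSpan (m : ℕ) : Submodule 𝕜 E := (span 𝕜 (v '' Ici m)).topologicalClosure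

theorem tailSpan_antitone : Antitone (tailSpan 𝕜 v) := fun _ _ h =>
  topologicalClosure_mono (span_mono (image_mono (Ici_subset_Ici.mpr h)))

theorem apply_mem_tailSpan {m k : ℕ} (h : m ≤ k) : v k ∈ tailSpan 𝕜 v m :=
  le_topologicalClosure _ (subset_span (mem_image_of_mem v h))

theorem tailSpan_le_topologicalClosure_sup (m : ℕ) :
    tailSpan 𝕜 v m ≤ (tailSpan 𝕜 v (m + 1) ⊔ span 𝕜 {v m}).topologicalClosure := by
  refine topologicalClosure_mono (span_le.mpr ?_)
  rintro _ ⟨k, hk, rfl⟩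
  rcases (mem_Ici.mp hk).eq_or_lt with rfl | hlt
  · exact mem_sup_right (mem_span_singleton_self _)
  · exact mem_sup_left (apply_mem_tailSpan 𝕜 v hlt)

theorem tailSpan_comp_add_one (m : ℕ) : tailSpan 𝕜 (fun k => v (k + 1)) m =
    (span 𝕜 (v '' {k | 1 ≤ k ∧ m + 1 ≤ k})).topologicalClosure := by
  have hset : {k | 1 ≤ k ∧ m + 1 ≤ k} = Ici (m + 1) :=
    Set.ext fun k => ⟨And.right, fun (hk : m + 1 ≤ k) => ⟨by omega, hk⟩⟩
  rw [tailSpan, hset, ← image_add_const_Ici, image_image]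

variable [CompleteSpace E]

instance (m : ℕ) : CompleteSpace (tailSpan 𝕜 v m) :=
  Submodule.topologicalClosure.completeSpace _

def tailInnovation (m : ℕ) : E := (tailSpan 𝕜 v (m + 1))ᗮ.starProjection (v m)

theorem tailInnovation_mem_tailSpan (m : ℕ) : tailInnovation 𝕜 v m ∈ tailSpan 𝕜 v m := by
  rw [tailInnovation, starProjection_orthogonal]
  exact sub_mem (apply_mem_tailSpan 𝕜 v le_rfl)
    (tailSpan_antitone 𝕜 v m.le_succ (starProjection_apply_mem _ _))

theorem tailInnovation_mem_orthogonal (m : ℕ) :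
    tailInnovation 𝕜 v m ∈ (tailSpan 𝕜 v (m + 1))ᗮ :=
  starProjection_apply_mem _ _

theorem tailInnovation_pairwise_orthogonal :
    Pairwise (⟪tailInnovation 𝕜 v ·, tailInnovation 𝕜 v ·⟫_𝕜 = 0) := by
  have h_lt {i j : ℕ} (h : i < j) : ⟪tailInnovation 𝕜 v i, tailInnovation 𝕜 v j⟫_𝕜 = 0 :=
    (mem_orthogonal' _ _).mp (tailInnovation_mem_orthogonal 𝕜 v i) _
      (tailSpan_antitone 𝕜 v h (tailInnovation_mem_tailSpan 𝕜 v j))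
  intro i j hij
  rcases hij.lt_or_gt with h | h
  · exact h_lt h
  · exact inner_eq_zero_symm.mp (h_lt h)

def innovationSpan : Submodule 𝕜 E := span 𝕜 (range (tailInnovation 𝕜 v))

theorem orthogonal_innovationSpan_le_tailSpan (hv : tailSpan 𝕜 v 0 = ⊤) (m : ℕ) :
    (innovationSpan 𝕜 v)ᗮ ≤ tailSpan 𝕜 v m := by
  intro x hx
  induction m with
  | zero => simp [hv]
  | succ m ih =>
    exact mem_of_mem_topologicalClosure_sup_span_singleton
      (tailSpan_le_topologicalClosure_sup 𝕜 v m ih)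
      ((mem_orthogonal _ _).mp hx _ (subset_span (mem_range_self m)))

def innovationFamily : ℕ → E := gramSchmidtNormed 𝕜 (tailInnovation 𝕜 v)

def remainderFamily : ℕ → E :=
  gramSchmidtNormed 𝕜 fun k => (innovationSpan 𝕜 v)ᗮ.starProjection (v k)

theorem innovationFamily_mem_tailSpan (m : ℕ) : innovationFamily 𝕜 v m ∈ tailSpan 𝕜 v m := by
  rw [innovationFamily, gramSchmidtNormed_of_orthogonal (tailInnovation_pairwise_orthogonal 𝕜 v)]
  exact smul_mem _ _ (tailInnovation_mem_tailSpan 𝕜 v m)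

theorem remainderFamily_mem_orthogonal (k : ℕ) :
    remainderFamily 𝕜 v k ∈ (innovationSpan 𝕜 v)ᗮ :=
  gramSchmidtNormed_mem (fun _ => starProjection_apply_mem _ _) k

theorem pairwise_inner_sumElim_remainderFamily_innovationFamily :
    Pairwise ((⟪·, ·⟫_𝕜 = 0) on Sum.elim (remainderFamily 𝕜 v) (innovationFamily 𝕜 v)) :=
  Pairwise.sumElim (fun _ _ => inner_eq_zero_symm.mp)
    (fun _ _ => inner_gramSchmidtNormed_eq_zero _) (fun _ _ => inner_gramSchmidtNormed_eq_zero _)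
    fun i j => inner_eq_zero_symm.mp <| (mem_orthogonal _ _).mp
      (remainderFamily_mem_orthogonal 𝕜 v i) _
      (gramSchmidtNormed_mem (fun k => subset_span (mem_range_self k)) j)

theorem topologicalClosure_span_remainderFamily_union_innovationFamily
    (hv : tailSpan 𝕜 v 0 = ⊤) :
    (span 𝕜 (range (remainderFamily 𝕜 v) ∪ range (innovationFamily 𝕜 v))).topologicalClosure =
      ⊤ := by
  rw [span_union, remainderFamily, innovationFamily, span_gramSchmidtNormed_range,
    span_gramSchmidtNormed_range, span_gramSchmidt, span_gramSchmidt]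
  have hF : (innovationSpan 𝕜 v)ᗮᗮ ≤
      (span 𝕜 (range fun k => (innovationSpan 𝕜 v)ᗮ.starProjection (v k)) ⊔
        innovationSpan 𝕜 v).topologicalClosure := by
    rw [orthogonal_orthogonal_eq_closure]
    exact topologicalClosure_mono le_sup_right
  rw [eq_top_iff, ← hv]
  refine topologicalClosure_minimal _ (span_le.mpr ?_) isClosed_closure
  rintro _ ⟨k, -, rfl⟩
  exact mem_topologicalClosure_of_starProjection_mem hF
    (mem_sup_left (subset_span (mem_range_self k)))

end

/-- If `(v n)_{n ≥ 1}` is a total sequence in a complex Hilbert space `H` and `H n` denotes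
the closed linear span of `{v k : k ≥ n}`, then there is a sequence `(u n)_{n ≥ 1}` of
pairwise orthogonal vectors, each of norm 0 or 1, with total closed linear span, such that
`u n ∈ H ⌈n/2⌉` for every `n ≥ 1`.  (In ℕ, `⌈n/2⌉ = (n + 1) / 2`.) -/
theorem total_sequence_exists_adapted_orthonormal_family
    {H : Type*} [NormedAddCommGroup H] [InnerProductSpace ℂ H] [CompleteSpace H]
    (v : ℕ → H)
    (hv : (Submodule.span ℂ (v '' {k | 1 ≤ k})).topologicalClosure = ⊤) :
    ∃ u : ℕ → H,
      (∀ n, 1 ≤ n →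
        u n ∈ (Submodule.span ℂ (v '' {k | 1 ≤ k ∧ (n + 1) / 2 ≤ k})).topologicalClosure) ∧
      (∀ m n, 1 ≤ m → 1 ≤ n → m ≠ n → (inner ℂ (u m) (u n) : ℂ) = 0) ∧
      (∀ n, 1 ≤ n → ‖u n‖ = 0 ∨ ‖u n‖ = 1) ∧
      (Submodule.span ℂ (u '' {n | 1 ≤ n})).topologicalClosure = ⊤ := by
  set w : ℕ → H := fun k => v (k + 1)
  have hw : tailSpan ℂ w 0 = ⊤ := (tailSpan_comp_add_one ℂ v 0).trans (by simpa using hv)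
  set g : ℕ ⊕ ℕ → H := Sum.elim (remainderFamily ℂ w) (innovationFamily ℂ w)
  refine ⟨fun n => g (Equiv.natSumNatEquivNat.symm (n - 1)), fun n hn => ?_,
    fun m n hm hn hmn => pairwise_inner_sumElim_remainderFamily_innovationFamily ℂ w
      (Equiv.natSumNatEquivNat.symm.injective.ne (by omega)),
    fun n _ => ?_, ?_⟩
  · obtain ⟨x, hx⟩ := Equiv.natSumNatEquivNat.surjective (n - 1)
    dsimp only
    rw [← hx, Equiv.symm_apply_apply]
    rcases x with k | k <;>
      simp only [Equiv.natSumNatEquivNat_apply, Sum.elim_inl, Sum.elim_inr] at hx ⊢ <;>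
      rw [(by omega : (n + 1) / 2 = k + 1), ← tailSpan_comp_add_one]
    · exact orthogonal_innovationSpan_le_tailSpan ℂ w hw k (remainderFamily_mem_orthogonal ℂ w k)
    · exact innovationFamily_mem_tailSpan ℂ w k
  · dsimp only
    cases Equiv.natSumNatEquivNat.symm (n - 1)
    all_goals exact norm_gramSchmidtNormed_eq_zero_or_one _ _
  · rw [Equiv.natSumNatEquivNat.symm.surjective.image_comp_sub_one_setOf_one_le,
      Sum.elim_range]
    exact topologicalClosure_span_remainderFamily_union_innovationFamily ℂ w hw
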